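/- arXiv:2308.07397 — 2 statements merged into one kernel-verified Lean document; each statement's English description precedes it below -/
import Mathlib

section
/- Let (Z^{(N)})_{N∈ℕ} be a sequence of DBPCs satisfying Assumption A, and let (b_N)_{N∈ℕ} be a sequence of positive real numbers with b_N → ∞ as N → ∞. Then for every fixed g ∈ ℕ₀ (along those N for which P(Z_g^{(N)} ≥ b_N) > 0): P(Z_{g+i}^{(N)} > 0 for all i ≥ 0 | Z_g^{(N)} ≥ b_N) → 1 as N → ∞. -/
open MeasureTheory ProbabilityTheory Filter

/-- A discrete-time branching process with cooperation (DBPC) with offspring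
distribution `Lo`, cooperation distribution `Lc`, started at `k₀`. -/
structure DBPC {Ω : Type*} [MeasurableSpace Ω] (P : Measure Ω)
    (Lo Lc : PMF ℕ) (k₀ : ℕ) where
  /-- offspring variables `X g i` -/
  X : ℕ → ℕ → Ω → ℕ
  /-- cooperation variables `Y g i j` -/
  Y : ℕ → ℕ → ℕ → Ω → ℕ
  /-- the process -/
  Z : ℕ → Ω → ℕ
  measX : ∀ g i, Measurable (X g i)
  measY : ∀ g i j, Measurable (Y g i j)
  measZ : ∀ g, Measurable (Z g)
  indep : iIndepFun
    (fun p : (ℕ × ℕ) ⊕ (ℕ × ℕ × ℕ) =>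
      Sum.elim (fun q : ℕ × ℕ => X q.1 q.2)
        (fun q : ℕ × ℕ × ℕ => Y q.1 q.2.1 q.2.2) p) P
  distX : ∀ g i, P.map (X g i) = Lo.toMeasure
  distY : ∀ g i j, P.map (Y g i j) = Lc.toMeasure
  init : ∀ᵐ ω ∂P, Z 0 ω = k₀
  step : ∀ g : ℕ, ∀ᵐ ω ∂P, Z (g + 1) ω =
    (∑ i ∈ Finset.Icc 1 (Z g ω), X (g + 1) i ω) +
      ∑ i ∈ Finset.Icc 1 (Z g ω), ∑ j ∈ Finset.Ico 1 i, Y (g + 1) i j ω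

/-- The mean of a probability distribution on `ℕ`. -/
noncomputable def pmfMean (L : PMF ℕ) : ℝ := ∑' j : ℕ, (j : ℝ) * (L j).toReal

/-- The variance of a probability distribution on `ℕ`. -/
noncomputable def pmfVar (L : PMF ℕ) : ℝ :=
  ∑' j : ℕ, ((j : ℝ) - pmfMean L) ^ 2 * (L j).toReal

/-!
Cooperation alone makes a large population grow. Among `k` individuals the `k (k - 1) / 2`
cooperation terms have mean `m k (k - 1) / 2` and variance `v k (k - 1) / 2`, where `m`, `v` are
the mean and variance of the cooperation law, so by Chebyshev the next generation is at least
twice as large except with probability `O(v / (m² k²))`, independently of the past. Starting from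
at least `b` individuals, the probability of ever missing one of the levels `b 2 ^ i` is therefore
at most `∑ᵢ 16 v / (m² b² 4 ^ i) = 64 v / (3 m² b²)`, which tends to `0` as `b → ∞` while `m` and
`v` converge, with `m` to a positive limit.
-/

open Finset
open scoped ENNReal

theorem measurable_apply_of_measurable_index {α ι γ : Type*} {mα : MeasurableSpace α}
    [MeasurableSpace ι] [Countable ι] [MeasurableSingletonClass ι] [MeasurableSpace γ]
    {g : α → ι} {W : ι → α → γ} (hg : Measurable g) (hW : ∀ k, Measurable (W k)) :
    Measurable fun a => W (g a) a :=
  (measurable_from_prod_countable_right (f := fun q : ι × α => W q.1 q.2) hW).comp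
    (hg.prodMk measurable_id)

theorem exists_forall_le_and_lt_succ {α : Type*} [LinearOrder α] {u t : ℕ → α}
    (h₀ : t 0 ≤ u 0) (h : ∃ i, u i < t i) :
    ∃ i, (∀ j ≤ i, t j ≤ u j) ∧ u (i + 1) < t (i + 1) := by
  classical
  obtain ⟨i, hi⟩ : ∃ i, Nat.find h = i + 1 :=
    Nat.exists_eq_add_one_of_ne_zero fun h0 => (Nat.find_spec h).not_ge (h0 ▸ h₀)
  exact ⟨i, fun j hj => not_lt.1 (Nat.find_min h (by omega)), hi ▸ Nat.find_spec h⟩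

namespace PMF

variable {α : Type*} [MeasurableSpace α] [MeasurableSingletonClass α] [Countable α]
  (p : PMF α)

theorem toMeasure_eq_sum_smul_dirac :
    p.toMeasure = Measure.sum fun a => p a • Measure.dirac a := by
  conv_lhs => rw [← Measure.sum_smul_dirac p.toMeasure]
  simp only [p.toMeasure_apply_singleton _ (measurableSet_singleton _)]

theorem integrable_iff_summable {f : α → ℝ} :
    Integrable f p.toMeasure ↔ Summable fun a => (p a).toReal * ‖f a‖ := by
  rw [toMeasure_eq_sum_smul_dirac]
  exact integrable_sum_dirac_iff p.apply_ne_top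

theorem integral_eq_tsum' (f : α → ℝ) : ∫ a, f a ∂p.toMeasure = ∑' a, (p a).toReal * f a := by
  rw [toMeasure_eq_sum_smul_dirac]
  exact integral_sum_dirac p.apply_ne_top

end PMF

theorem pmfMean_eq_integral (p : PMF ℕ) : pmfMean p = ∫ n, (n : ℝ) ∂p.toMeasure := by
  simp only [pmfMean, PMF.integral_eq_tsum', mul_comm]

theorem pmfVar_eq_variance (p : PMF ℕ) : pmfVar p = Var[fun n : ℕ => (n : ℝ); p.toMeasure] := by
  rw [variance_eq_integral measurable_from_top.aemeasurable, ← pmfMean_eq_integral,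
    PMF.integral_eq_tsum', pmfVar]
  simp only [mul_comm]

theorem pmfVar_nonneg (p : PMF ℕ) : 0 ≤ pmfVar p := pmfVar_eq_variance p ▸ variance_nonneg _ _

theorem PMF.memLp_two_natCast {p : PMF ℕ}
    (h : Summable fun j : ℕ => (j : ℝ) ^ 2 * (p j).toReal) :
    MemLp (fun n : ℕ => (n : ℝ)) 2 p.toMeasure := by
  rw [memLp_two_iff_integrable_sq measurable_from_top.aestronglyMeasurable,
    p.integrable_iff_summable]
  simpa [mul_comm] using h

section Law

variable {Ω : Type*} [MeasurableSpace Ω] {P : Measure Ω} {p : PMF ℕ} {X : Ω → ℕ}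

theorem integral_natCast_of_map_eq (hX : Measurable X) (hlaw : P.map X = p.toMeasure) :
    ∫ ω, (X ω : ℝ) ∂P = pmfMean p := by
  rw [pmfMean_eq_integral, ← hlaw,
    integral_map hX.aemeasurable measurable_from_top.aestronglyMeasurable]

theorem variance_natCast_of_map_eq (hX : Measurable X) (hlaw : P.map X = p.toMeasure) :
    Var[fun ω => (X ω : ℝ); P] = pmfVar p := by
  rw [pmfVar_eq_variance, ← hlaw, variance_map measurable_from_top.aemeasurable hX.aemeasurable]
  rfl

theorem memLp_two_natCast_of_map_eq (hX : Measurable X) (hlaw : P.map X = p.toMeasure)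
    (h : Summable fun j : ℕ => (j : ℝ) ^ 2 * (p j).toReal) :
    MemLp (fun ω => (X ω : ℝ)) 2 P := by
  have := PMF.memLp_two_natCast h
  rw [← hlaw] at this
  exact (memLp_map_measure_iff measurable_from_top.aestronglyMeasurable hX.aemeasurable).1 this

end Law

theorem measure_sum_lt_half_le {ι Ω : Type*} [MeasurableSpace Ω] {P : Measure Ω}
    [IsFiniteMeasure P] {s : Finset ι} (hs : s.Nonempty) {Y : ι → Ω → ℝ}
    (hY : ∀ i ∈ s, MemLp (Y i) 2 P) (hindep : Set.Pairwise ↑s fun i j => IndepFun (Y i) (Y j) P)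
    {m v : ℝ} (hm : 0 < m) (hmean : ∀ i ∈ s, m ≤ P[Y i]) (hvar : ∀ i ∈ s, Var[Y i; P] ≤ v) :
    P {ω | ∑ i ∈ s, Y i ω < #s * m / 2} ≤ ENNReal.ofReal (4 * v / (#s * m ^ 2)) := by
  set c : ℝ := #s * m / 2
  have hcard : (0 : ℝ) < #s := by exact_mod_cast hs.card_pos
  have hc : 0 < c := by positivity
  have hmean_sum : 2 * c ≤ ∫ ω, ∑ i ∈ s, Y i ω ∂P := by
    rw [integral_finsetSum s fun i hi => (hY i hi).integrable one_le_two]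
    calc 2 * c = ∑ _i ∈ s, m := by simp only [c, sum_const, nsmul_eq_mul]; ring
      _ ≤ ∑ i ∈ s, P[Y i] := sum_le_sum hmean
  have hdev : {ω | ∑ i ∈ s, Y i ω < c} ⊆ {ω | c ≤ |(∑ i ∈ s, Y i) ω - P[∑ i ∈ s, Y i]|} := by
    intro ω hω
    simp only [Set.mem_ofPred_eq, Finset.sum_apply] at hω ⊢
    rw [abs_sub_comm]
    exact le_abs.2 (Or.inl (by linarith))
  have hvar_sum : Var[∑ i ∈ s, Y i; P] ≤ #s * v := by
    rw [IndepFun.variance_sum hY hindep]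
    simpa using sum_le_sum hvar
  calc P {ω | ∑ i ∈ s, Y i ω < c}
      ≤ ENNReal.ofReal (Var[∑ i ∈ s, Y i; P] / c ^ 2) :=
        (measure_mono hdev).trans (meas_ge_le_variance_div_sq (memLp_finsetSum' s hY) hc)
    _ ≤ ENNReal.ofReal (4 * v / (#s * m ^ 2)) := by
        gcongr ENNReal.ofReal ?_
        calc Var[∑ i ∈ s, Y i; P] / c ^ 2 ≤ #s * v / c ^ 2 := by gcongr
          _ = 4 * v / (#s * m ^ 2) := by simp only [c]; field_simp; ring

theorem cond_apply_le_of_measure_inter_le {Ω : Type*} [MeasurableSpace Ω] {μ : Measure Ω}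
    {s t : Set Ω} (hs : MeasurableSet s) {c : ℝ≥0∞} (h : μ (s ∩ t) ≤ μ s * c) : μ[t | s] ≤ c := by
  rw [cond_apply hs]
  rcases eq_or_ne (μ s) 0 with h0 | h0
  · simp [measure_mono_null Set.inter_subset_left h0]
  rcases eq_or_ne (μ s) ∞ with htop | htop
  · simp [htop]
  exact (ENNReal.inv_mul_le_iff h0 htop).2 h

namespace DBPC

def generation : (ℕ × ℕ) ⊕ (ℕ × ℕ × ℕ) → ℕ := Sum.elim Prod.fst Prod.fst

def pairs (k : ℕ) : Finset (Σ _ : ℕ, ℕ) := (Icc 1 k).sigma fun i => Ico 1 i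

theorem card_pairs_mul_two (k : ℕ) : #(pairs k) * 2 = k * (k - 1) := by
  rw [pairs, card_sigma, ← Ico_add_one_right_eq_Icc, sum_Ico_eq_sum_range,
    ← sum_range_id_mul_two]
  simp

theorem sq_le_four_mul_card_pairs {k : ℕ} (hk : 2 ≤ k) : (k : ℝ) ^ 2 ≤ 4 * #(pairs k) := by
  have h := congrArg (Nat.cast : ℕ → ℝ) (card_pairs_mul_two k)
  push_cast [Nat.cast_sub (by omega : 1 ≤ k)] at h
  have hk' : (2 : ℝ) ≤ k := by exact_mod_cast hk
  nlinarith

variable {Ω : Type*} [MeasurableSpace Ω] {P : Measure Ω} {Lo Lc : PMF ℕ} {k₀ : ℕ}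
  (B : DBPC P Lo Lc k₀)

def family (p : (ℕ × ℕ) ⊕ (ℕ × ℕ × ℕ)) : Ω → ℕ :=
  Sum.elim (fun q : ℕ × ℕ => B.X q.1 q.2) (fun q : ℕ × ℕ × ℕ => B.Y q.1 q.2.1 q.2.2) p

theorem measurable_family (p : (ℕ × ℕ) ⊕ (ℕ × ℕ × ℕ)) : Measurable (B.family p) := by
  rcases p with ⟨g, i⟩ | ⟨g, i, j⟩
  exacts [B.measX g i, B.measY g i j]

abbrev generationSigma (s : Set ℕ) : MeasurableSpace Ω :=
  ⨆ p ∈ generation ⁻¹' s, MeasurableSpace.comap (B.family p) inferInstance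

theorem generationSigma_le (s : Set ℕ) : B.generationSigma s ≤ ‹MeasurableSpace Ω› :=
  iSup₂_le fun p _ => (B.measurable_family p).comap_le

theorem generationSigma_mono {s t : Set ℕ} (hst : s ⊆ t) :
    B.generationSigma s ≤ B.generationSigma t :=
  biSup_mono fun _ hp => hst hp

theorem measurable_family_generationSigma {s : Set ℕ} {p : (ℕ × ℕ) ⊕ (ℕ × ℕ × ℕ)}
    (hp : generation p ∈ s) : Measurable[B.generationSigma s] (B.family p) :=
  measurable_iff_comap_le.2 <| le_iSup₂ (f := fun p (_ : p ∈ generation ⁻¹' s) =>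
    MeasurableSpace.comap (B.family p) inferInstance) p hp

theorem indep_generationSigma {s t : Set ℕ} (hst : Disjoint s t) :
    Indep (B.generationSigma s) (B.generationSigma t) P :=
  indep_iSup_of_disjoint (fun p => (B.measurable_family p).comap_le) B.indep
    (hst.preimage generation)

/-- The defining recursion of `Z`, evaluated pointwise: `B.Z` satisfies it only almost surely. -/
def recZ : ℕ → Ω → ℕ
  | 0 => fun _ => k₀
  | n + 1 => fun ω => (∑ i ∈ Icc 1 (recZ n ω), B.X (n + 1) i ω) +
      ∑ i ∈ Icc 1 (recZ n ω), ∑ j ∈ Ico 1 i, B.Y (n + 1) i j ω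

theorem measurable_recZ (n : ℕ) : Measurable[B.generationSigma (Set.Iic n)] (B.recZ n) := by
  induction n with
  | zero => exact measurable_const
  | succ n ih =>
    have hX : ∀ i, Measurable[B.generationSigma (Set.Iic (n + 1))] (B.X (n + 1) i) := fun i =>
      B.measurable_family_generationSigma (p := .inl (n + 1, i)) Set.self_mem_Iic
    have hY : ∀ i j, Measurable[B.generationSigma (Set.Iic (n + 1))] (B.Y (n + 1) i j) :=
      fun i j => B.measurable_family_generationSigma (p := .inr (n + 1, i, j)) Set.self_mem_Iic
    refine measurable_apply_of_measurable_index
      (W := fun k ω => (∑ i ∈ Icc 1 k, B.X (n + 1) i ω) +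
        ∑ i ∈ Icc 1 k, ∑ j ∈ Ico 1 i, B.Y (n + 1) i j ω)
      (ih.mono (B.generationSigma_mono (Set.Iic_subset_Iic.2 n.le_succ)) le_rfl) fun k => ?_
    exact (Finset.measurable_sum _ fun i _ => hX i).add
      (Finset.measurable_sum _ fun i _ => Finset.measurable_sum _ fun j _ => hY i j)

theorem ae_Z_eq_recZ : ∀ᵐ ω ∂P, ∀ n, B.Z n ω = B.recZ n ω := by
  rw [ae_all_iff]
  intro n
  induction n with
  | zero => exact B.init
  | succ n ih =>
    filter_upwards [ih, B.step n] with ω h h_step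
    rw [h_step, h]
    rfl

def coopSum (n k : ℕ) (ω : Ω) : ℝ := ∑ q ∈ pairs k, (B.Y n q.1 q.2 ω : ℝ)

theorem coopSum_recZ_le (n : ℕ) (ω : Ω) :
    B.coopSum (n + 1) (B.recZ n ω) ω ≤ B.recZ (n + 1) ω := by
  rw [coopSum, pairs, sum_sigma, recZ]
  push_cast
  exact le_add_of_nonneg_left (by positivity)

theorem measurable_coopSum (n k : ℕ) : Measurable[B.generationSigma {n}] (B.coopSum n k) :=
  Finset.measurable_sum _ fun q _ => measurable_from_top.comp
    (B.measurable_family_generationSigma (p := .inr (n, q.1, q.2)) rfl)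

theorem indepFun_Y {n i j n' i' j' : ℕ} (h : (n, i, j) ≠ (n', i', j')) :
    IndepFun (fun ω => (B.Y n i j ω : ℝ)) (fun ω => (B.Y n' i' j' ω : ℝ)) P := by
  have hindep : iIndepFun B.family P := B.indep
  exact (hindep.indepFun (i := .inr (n, i, j)) (j := .inr (n', i', j'))
    (Sum.inr_injective.ne h)).comp measurable_from_top measurable_from_top

theorem measure_coopSum_lt_le [IsFiniteMeasure P]
    (hfin : Summable fun j : ℕ => (j : ℝ) ^ 2 * (Lc j).toReal) (n : ℕ) {s : ℝ} (hs : 2 ≤ s)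
    (hms : 16 ≤ pmfMean Lc * s) {k : ℕ} (hk : s ≤ k) :
    P {ω | B.coopSum n k ω < 2 * s}
      ≤ ENNReal.ofReal (16 * pmfVar Lc / (pmfMean Lc ^ 2 * s ^ 2)) := by
  set m := pmfMean Lc
  have hm : 0 < m := by nlinarith
  have hs_sq : s ^ 2 ≤ 4 * #(pairs k) :=
    le_trans (by gcongr) (sq_le_four_mul_card_pairs (by exact_mod_cast hs.trans hk))
  have hcard : (0 : ℝ) < #(pairs k) := by nlinarith
  have hchebyshev := measure_sum_lt_half_le (P := P) (s := pairs k)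
    (card_pos.1 (by exact_mod_cast hcard)) (Y := fun (q : Σ _ : ℕ, ℕ) ω => (B.Y n q.1 q.2 ω : ℝ))
    (fun q _ => memLp_two_natCast_of_map_eq (B.measY _ _ _) (B.distY _ _ _) hfin)
    (fun q _ q' _ hqq' => B.indepFun_Y fun h => hqq' (by simpa [Sigma.ext_iff] using h)) hm
    (fun q _ => (integral_natCast_of_map_eq (B.measY _ _ _) (B.distY _ _ _)).ge)
    (fun q _ => (variance_natCast_of_map_eq (B.measY _ _ _) (B.distY _ _ _)).le)
  refine (measure_mono fun ω (hω : B.coopSum n k ω < 2 * s) => ?_).trans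
    (hchebyshev.trans (ENNReal.ofReal_le_ofReal ?_))
  · show B.coopSum n k ω < #(pairs k) * m / 2
    nlinarith
  · rw [div_le_div_iff₀ (by positivity) (by positivity)]
    nlinarith [mul_le_mul_of_nonneg_left hs_sq (mul_nonneg (pmfVar_nonneg Lc) (sq_nonneg m))]

theorem measure_inter_recZ_succ_lt_le [IsFiniteMeasure P]
    (hfin : Summable fun j : ℕ => (j : ℝ) ^ 2 * (Lc j).toReal) {n : ℕ} {E : Set Ω}
    (hE : MeasurableSet[B.generationSigma (Set.Iic n)] E) {s : ℝ} (hs : 2 ≤ s)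
    (hms : 16 ≤ pmfMean Lc * s) (hEs : ∀ ω ∈ E, s ≤ B.recZ n ω) :
    P (E ∩ {ω | (B.recZ (n + 1) ω : ℝ) < 2 * s})
      ≤ P E * ENNReal.ofReal (16 * pmfVar Lc / (pmfMean Lc ^ 2 * s ^ 2)) := by
  set δ := ENNReal.ofReal (16 * pmfVar Lc / (pmfMean Lc ^ 2 * s ^ 2))
  set E' : ℕ → Set Ω := fun k => E ∩ B.recZ n ⁻¹' {k}
  have hE' : ∀ k, MeasurableSet[B.generationSigma (Set.Iic n)] (E' k) :=
    fun k => hE.inter (B.measurable_recZ n (measurableSet_singleton k))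
  have hcover : E ∩ {ω | (B.recZ (n + 1) ω : ℝ) < 2 * s}
      ⊆ ⋃ k, E' k ∩ {ω | B.coopSum (n + 1) k ω < 2 * s} := fun ω ⟨hωE, hω⟩ =>
    Set.mem_iUnion.2 ⟨B.recZ n ω, ⟨hωE, rfl⟩, (B.coopSum_recZ_le n ω).trans_lt hω⟩
  have hterm : ∀ k, P (E' k ∩ {ω | B.coopSum (n + 1) k ω < 2 * s}) ≤ P (E' k) * δ := by
    intro k
    rcases (E' k).eq_empty_or_nonempty with hempty | ⟨ω, hωE, hωk⟩
    · simp [hempty]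
    have hk : s ≤ k := hωk ▸ hEs ω hωE
    have hindep := B.indep_generationSigma (s := Set.Iic n) (t := {n + 1}) (by simp)
    rw [(Indep_iff _ _ P).1 hindep _ _ (hE' k)
      (measurableSet_lt (B.measurable_coopSum (n + 1) k) measurable_const)]
    gcongr
    exact B.measure_coopSum_lt_le hfin (n + 1) hs hms hk
  calc P (E ∩ {ω | (B.recZ (n + 1) ω : ℝ) < 2 * s})
      ≤ ∑' k, P (E' k ∩ {ω | B.coopSum (n + 1) k ω < 2 * s}) :=
        (measure_mono hcover).trans (measure_iUnion_le _)
    _ ≤ ∑' k, P (E' k) * δ := ENNReal.tsum_le_tsum hterm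
    _ ≤ P E * δ := by
        rw [ENNReal.tsum_mul_right]
        gcongr
        refine (tsum_meas_le_meas_iUnion_of_disjoint P
          (fun k => B.generationSigma_le _ _ (hE' k)) ?_).trans
          (measure_mono (Set.iUnion_subset fun k => Set.inter_subset_left))
        exact fun k l hkl => Set.disjoint_left.2 fun ω hk hl => hkl (hk.2.symm.trans hl.2)

def reachesLevels (g i : ℕ) (b : ℝ) : Set Ω := {ω | ∀ j ≤ i, b * 2 ^ j ≤ B.recZ (g + j) ω}

theorem measurableSet_reachesLevels (g i : ℕ) (b : ℝ) :
    MeasurableSet[B.generationSigma (Set.Iic (g + i))] (B.reachesLevels g i b) := by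
  simp only [reachesLevels, Set.ofPred_forall]
  refine MeasurableSet.iInter fun j => MeasurableSet.iInter fun hj => ?_
  exact measurableSet_le measurable_const (measurable_from_top.comp
    ((B.measurable_recZ (g + j)).mono (B.generationSigma_mono
      (Set.Iic_subset_Iic.2 (Nat.add_le_add_left hj g))) le_rfl))

theorem inter_extinct_subset_iUnion (g : ℕ) {b : ℝ} (hb : 0 < b) :
    {ω | b ≤ B.recZ g ω} ∩ {ω | ∃ i, B.recZ (g + i) ω = 0}
      ⊆ ⋃ i, B.reachesLevels g i b ∩ {ω | (B.recZ (g + i + 1) ω : ℝ) < b * 2 ^ (i + 1)} := by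
  rintro ω ⟨hωb : b ≤ _, i, hi⟩
  obtain ⟨i, hlevels, hlt⟩ := exists_forall_le_and_lt_succ
    (u := fun i => (B.recZ (g + i) ω : ℝ)) (t := fun i => b * 2 ^ i)
    (by simpa using hωb) ⟨i, by simp only [hi, Nat.cast_zero]; positivity⟩
  exact Set.mem_iUnion.2 ⟨i, hlevels, hlt⟩

theorem measure_reachesLevels_inter_lt_le [IsFiniteMeasure P]
    (hfin : Summable fun j : ℕ => (j : ℝ) ^ 2 * (Lc j).toReal) (g i : ℕ) {b : ℝ} (hb : 2 ≤ b)
    (hmb : 16 ≤ pmfMean Lc * b) :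
    P (B.reachesLevels g i b ∩ {ω | (B.recZ (g + i + 1) ω : ℝ) < b * 2 ^ (i + 1)})
      ≤ P {ω | b ≤ B.recZ g ω}
        * ENNReal.ofReal (16 * pmfVar Lc / (pmfMean Lc ^ 2 * b ^ 2) * (1 / 4) ^ i) := by
  have hm : 0 < pmfMean Lc := by nlinarith
  have hb_le : b ≤ b * 2 ^ i := le_mul_of_one_le_right (by linarith) (one_le_pow₀ one_le_two)
  have h4 : ((2 : ℝ) ^ i) ^ 2 = 4 ^ i := by rw [← pow_mul, mul_comm, pow_mul]; norm_num
  rw [pow_succ, ← mul_assoc, mul_comm _ 2]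
  calc _ ≤ P (B.reachesLevels g i b)
        * ENNReal.ofReal (16 * pmfVar Lc / (pmfMean Lc ^ 2 * (b * 2 ^ i) ^ 2)) :=
        B.measure_inter_recZ_succ_lt_le hfin (B.measurableSet_reachesLevels g i b)
          (hb.trans hb_le) (hmb.trans (by gcongr)) fun ω hω => hω i le_rfl
    _ ≤ _ := by
        gcongr ?_ * ENNReal.ofReal ?_
        · exact measure_mono fun ω hω => show b ≤ _ by simpa using hω 0 (Nat.zero_le i)
        · rw [mul_pow, h4, one_div_pow]
          field_simp
          rfl

theorem measure_inter_recZ_extinct_le [IsFiniteMeasure P]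
    (hfin : Summable fun j : ℕ => (j : ℝ) ^ 2 * (Lc j).toReal) (g : ℕ) {b : ℝ} (hb : 2 ≤ b)
    (hmb : 16 ≤ pmfMean Lc * b) :
    P ({ω | b ≤ B.recZ g ω} ∩ {ω | ∃ i, B.recZ (g + i) ω = 0})
      ≤ P {ω | b ≤ B.recZ g ω}
        * ENNReal.ofReal (64 * pmfVar Lc / (3 * pmfMean Lc ^ 2) / b ^ 2) := by
  set ε : ℕ → ℝ := fun i => 16 * pmfVar Lc / (pmfMean Lc ^ 2 * b ^ 2) * (1 / 4) ^ i
  have hε : HasSum ε (64 * pmfVar Lc / (3 * pmfMean Lc ^ 2) / b ^ 2) := by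
    have h := (hasSum_geometric_of_lt_one (by norm_num) (by norm_num : (1 / 4 : ℝ) < 1)).mul_left
      (16 * pmfVar Lc / (pmfMean Lc ^ 2 * b ^ 2))
    rwa [show 16 * pmfVar Lc / (pmfMean Lc ^ 2 * b ^ 2) * (1 - 1 / 4)⁻¹
      = 64 * pmfVar Lc / (3 * pmfMean Lc ^ 2) / b ^ 2 by field_simp; ring] at h
  have hε_nonneg : ∀ i, 0 ≤ ε i := fun i =>
    mul_nonneg (div_nonneg (mul_nonneg (by norm_num) (pmfVar_nonneg Lc)) (by positivity))
      (by positivity)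
  calc _ ≤ ∑' i, P (B.reachesLevels g i b ∩ {ω | (B.recZ (g + i + 1) ω : ℝ) < b * 2 ^ (i + 1)}) :=
        (measure_mono (B.inter_extinct_subset_iUnion g (by linarith))).trans
          (measure_iUnion_le _)
    _ ≤ ∑' i, P {ω | b ≤ B.recZ g ω} * ENNReal.ofReal (ε i) :=
        ENNReal.tsum_le_tsum fun i => B.measure_reachesLevels_inter_lt_le hfin g i hb hmb
    _ = _ := by
        rw [ENNReal.tsum_mul_left, ← ENNReal.ofReal_tsum_of_nonneg hε_nonneg hε.summable,
          hε.tsum_eq]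

theorem measurableSet_extinct (g : ℕ) : MeasurableSet {ω | ∃ i, B.Z (g + i) ω = 0} := by
  simp only [Set.ofPred_exists]
  exact .iUnion fun i => B.measZ _ (measurableSet_singleton 0)

theorem cond_extinct_le [IsFiniteMeasure P]
    (hfin : Summable fun j : ℕ => (j : ℝ) ^ 2 * (Lc j).toReal) (g : ℕ) {b : ℝ} (hb : 2 ≤ b)
    (hmb : 16 ≤ pmfMean Lc * b) :
    P[{ω | ∃ i, B.Z (g + i) ω = 0} | {ω | b ≤ (B.Z g ω : ℝ)}]
      ≤ ENNReal.ofReal (64 * pmfVar Lc / (3 * pmfMean Lc ^ 2) / b ^ 2) := by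
  refine cond_apply_le_of_measure_inter_le (s := {ω | b ≤ (B.Z g ω : ℝ)})
    (measurableSet_le measurable_const (measurable_from_top.comp (B.measZ g))) ?_
  have hA : {ω | b ≤ (B.Z g ω : ℝ)} =ᵐ[P] {ω | b ≤ (B.recZ g ω : ℝ)} :=
    eventuallyEq_set.2 (B.ae_Z_eq_recZ.mono fun ω h => by simp [h])
  have hext : {ω | ∃ i, B.Z (g + i) ω = 0} =ᵐ[P] {ω | ∃ i, B.recZ (g + i) ω = 0} :=
    eventuallyEq_set.2 (B.ae_Z_eq_recZ.mono fun ω h => by simp [h])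
  rw [measure_congr (hA.inter hext), measure_congr hA]
  exact B.measure_inter_recZ_extinct_le hfin g hb hmb

theorem toReal_cond_survival [IsFiniteMeasure P] (g : ℕ) {A : Set Ω} (hA : P A ≠ 0) :
    (P[{ω | ∀ i, 0 < B.Z (g + i) ω} | A]).toReal
      = 1 - (P[{ω | ∃ i, B.Z (g + i) ω = 0} | A]).toReal := by
  have := cond_isProbabilityMeasure hA
  have hS : {ω | ∀ i, 0 < B.Z (g + i) ω} = {ω | ∃ i, B.Z (g + i) ω = 0}ᶜ := by
    ext ω
    simp [pos_iff_ne_zero]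
  rw [hS, ← measureReal_def, probReal_compl_eq_one_sub (B.measurableSet_extinct g)]
  rfl

end DBPC

theorem dbpc_conditional_survival_tendsto_one_general
    (Ω : ℕ → Type*) [∀ N, MeasurableSpace (Ω N)]
    (P : ∀ N, Measure (Ω N)) [∀ N, IsProbabilityMeasure (P N)]
    (Lo Lc : ℕ → PMF ℕ) (k₀ : ℕ → ℕ)
    (B : ∀ N, DBPC (P N) (Lo N) (Lc N) (k₀ N))
    (μc νc : ℝ) (hμc : 0 < μc)
    (hfinLc : ∀ N, Summable (fun j : ℕ => ((j : ℝ)) ^ 2 * ((Lc N) j).toReal))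
    (hconvμc : Tendsto (fun N => pmfMean (Lc N)) atTop (nhds μc))
    (hconvνc : Tendsto (fun N => pmfVar (Lc N)) atTop (nhds νc))
    (b : ℕ → ℝ) (hb : Tendsto b atTop atTop)
    (g : ℕ)
    (hpos : ∀ N, 0 < P N {ω | b N ≤ ((B N).Z g ω : ℝ)}) :
    Tendsto (fun N =>
      ((ProbabilityTheory.cond (P N) {ω | b N ≤ ((B N).Z g ω : ℝ)})
        {ω | ∀ i : ℕ, 0 < (B N).Z (g + i) ω}).toReal) atTop (nhds 1) := by
  set ρ : ℕ → ℝ := fun N => 64 * pmfVar (Lc N) / (3 * pmfMean (Lc N) ^ 2) / b N ^ 2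
  have hρ : Tendsto ρ atTop (nhds 0) :=
    ((hconvνc.const_mul 64).div ((hconvμc.pow 2).const_mul 3) (by positivity)).div_atTop
      ((tendsto_pow_atTop two_ne_zero).comp hb)
  set q : ℕ → ℝ := fun N =>
    ((P N)[{ω | ∃ i, (B N).Z (g + i) ω = 0} | {ω | b N ≤ ((B N).Z g ω : ℝ)}]).toReal
  have hq : Tendsto q atTop (nhds 0) := by
    refine squeeze_zero' (Eventually.of_forall fun N => ENNReal.toReal_nonneg) ?_ hρ
    filter_upwards [hb.eventually_ge_atTop 2,
      (hconvμc.pos_mul_atTop hμc hb).eventually_ge_atTop 16] with N hb2 hmb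
    have := pmfVar_nonneg (Lc N)
    exact ENNReal.toReal_le_of_le_ofReal (by positivity)
      ((B N).cond_extinct_le (hfinLc N) g hb2 hmb)
  have h_one_sub : Tendsto (fun N => 1 - q N) atTop (nhds 1) := by
    simpa using tendsto_const_nhds.sub hq
  exact h_one_sub.congr fun N => ((B N).toReal_cond_survival g (hpos N).ne').symm

/-- For a sequence of DBPCs satisfying Assumption A (means and variances of
the offspring and cooperation distributions converge to finite positive
limits), conditioned on reaching a level `b N → ∞` at generation `g`, the
processes survive with probability tending to `1`. -/
theorem dbpc_conditional_survival_tendsto_one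
    (Ω : ℕ → Type*) [∀ N, MeasurableSpace (Ω N)]
    (P : ∀ N, Measure (Ω N)) [∀ N, IsProbabilityMeasure (P N)]
    (Lo Lc : ℕ → PMF ℕ) (k₀ : ℕ → ℕ)
    (B : ∀ N, DBPC (P N) (Lo N) (Lc N) (k₀ N))
    (μo μc νo νc : ℝ) (hμo : 0 < μo) (hμc : 0 < μc) (hνo : 0 < νo) (hνc : 0 < νc)
    (hfinLo : ∀ N, Summable (fun j : ℕ => ((j : ℝ)) ^ 2 * ((Lo N) j).toReal))
    (hfinLc : ∀ N, Summable (fun j : ℕ => ((j : ℝ)) ^ 2 * ((Lc N) j).toReal))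
    (hconvμo : Tendsto (fun N => pmfMean (Lo N)) atTop (nhds μo))
    (hconvμc : Tendsto (fun N => pmfMean (Lc N)) atTop (nhds μc))
    (hconvνo : Tendsto (fun N => pmfVar (Lo N)) atTop (nhds νo))
    (hconvνc : Tendsto (fun N => pmfVar (Lc N)) atTop (nhds νc))
    (b : ℕ → ℝ) (hbpos : ∀ N, 0 < b N) (hb : Tendsto b atTop atTop)
    (g : ℕ)
    (hpos : ∀ N, 0 < P N {ω | b N ≤ ((B N).Z g ω : ℝ)}) :
    Tendsto (fun N =>
      ((ProbabilityTheory.cond (P N) {ω | b N ≤ ((B N).Z g ω : ℝ)})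
        {ω | ∀ i : ℕ, 0 < (B N).Z (g + i) ω}).toReal) atTop (nhds 1) :=
  dbpc_conditional_survival_tendsto_one_general Ω P Lo Lc k₀ B μc νc hμc hfinLc hconvμc hconvνc b hb
    g hpos
end

section
/- Let 0 < β < 1 and a > 0, and let (D_N), (V_N) be sequences of positive integers with D_N → ∞ and V_N ~ a√(D_N). Let φ₁(N), φ₂(N) be nonnegative integer sequences with φ₁(N) = o(D_N) and φ₂(N) = o(D_N), let φ₃(N) be a nonnegative integer sequence with φ₃(N) = o(V_N), and let H(N) be a positive integer sequence such that N^ε = o(H(N)) for some ε > 0 and H(N) = o(√(D_N)). Place H(N)·(V_N − φ₃(N)) balls independently and uniformly at random into D_N − φ₁(N) boxes, and let G^{(N)} be the number of boxes among the first D_N − φ₁(N) − φ₂(N) boxes that contain at least 2 balls. Then for every positive sequence f₂(N) with f₂(N) → ∞ there exist a constant C > 0 and N₀ such that for all N ≥ N₀: P(G^{(N)} > H(N)²·f₂(N)) ≤ C/f₂(N). -/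
open Filter

/-- The number of balls that the placement `ω` puts into box `x`. -/
def boxCount {b B : ℕ} (ω : Fin b → Fin B) (x : Fin B) : ℕ :=
  (Finset.univ.filter fun i => ω i = x).card

set_option maxHeartbeats 1000000

lemma pair_bound {n B : ℕ} (ω : Fin n → Fin B) (m : ℕ) :
    2 * (Finset.univ.filter fun x : Fin B => (x:ℕ) < m ∧ 2 ≤ boxCount ω x).card ≤
    (Finset.univ.filter fun p : Fin n × Fin n => p.1 ≠ p.2 ∧ ω p.1 = ω p.2).card := by
  classical
  set S := Finset.univ.filter fun x : Fin B => (x:ℕ) < m ∧ 2 ≤ boxCount ω x with hS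
  set A : Fin B → Finset (Fin n × Fin n) := fun x =>
    Finset.univ.filter fun p => p.1 ≠ p.2 ∧ ω p.1 = x ∧ ω p.2 = x with hA
  have hdisj : ∀ x ∈ S, ∀ y ∈ S, x ≠ y → Disjoint (A x) (A y) := by
    intro x _ y _ hxy
    rw [Finset.disjoint_left]
    intro p hp hq
    simp only [hA, Finset.mem_filter] at hp hq
    exact hxy (hp.2.2.1 ▸ hq.2.2.1)
  have hcard : ∀ x ∈ S, 2 ≤ (A x).card := by
    intro x hx
    simp only [hS, Finset.mem_filter] at hx
    have hx2 : 1 < (Finset.univ.filter fun i => ω i = x).card := hx.2.2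
    obtain ⟨i, hi, j, hj, hij⟩ := Finset.one_lt_card.mp hx2
    simp only [Finset.mem_filter] at hi hj
    have hsub : ({(i, j), (j, i)} : Finset (Fin n × Fin n)) ⊆ A x := by
      intro p hp
      simp only [Finset.mem_insert, Finset.mem_singleton] at hp
      rcases hp with rfl | rfl <;>
        simp [hA, hij, hij.symm, hi.2, hj.2]
    have h2 : ({(i, j), (j, i)} : Finset (Fin n × Fin n)).card = 2 := by
      rw [Finset.card_insert_of_notMem (by simp [hij]), Finset.card_singleton]
    calc 2 = ({(i, j), (j, i)} : Finset (Fin n × Fin n)).card := h2.symm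
      _ ≤ (A x).card := Finset.card_le_card hsub
  calc 2 * S.card = ∑ _x ∈ S, 2 := by rw [Finset.sum_const, smul_eq_mul, mul_comm]
    _ ≤ ∑ x ∈ S, (A x).card := Finset.sum_le_sum hcard
    _ = (S.biUnion A).card := (Finset.card_biUnion hdisj).symm
    _ ≤ _ := by
        apply Finset.card_le_card
        intro p hp
        simp only [Finset.mem_biUnion, hA, Finset.mem_filter] at hp
        obtain ⟨x, _, _, h1, h2, h3⟩ := hp
        simp [h1, h2, h3, h2.trans h3.symm]

lemma fiber_bound {n B : ℕ} {i j : Fin n} (hij : i ≠ j) :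
    (Finset.univ.filter fun ω : Fin n → Fin B => ω i = ω j).card ≤ B ^ (n - 1) := by
  classical
  rw [← Fintype.card_subtype]
  have hinj : Function.Injective (fun (ω : {ω : Fin n → Fin B // ω i = ω j})
      (k : {k : Fin n // k ≠ j}) => ω.1 k.1) := by
    rintro ⟨ω₁, h₁⟩ ⟨ω₂, h₂⟩ h
    have h' : ∀ k : Fin n, k ≠ j → ω₁ k = ω₂ k := fun k hk => congrFun h ⟨k, hk⟩
    apply Subtype.ext
    funext k
    show ω₁ k = ω₂ k
    rcases eq_or_ne k j with rfl | hk
    · have := h' i hij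
      rw [← h₁, ← h₂, this]
    · rw [h' k hk]
  calc Fintype.card {ω : Fin n → Fin B // ω i = ω j}
      ≤ Fintype.card ({k : Fin n // k ≠ j} → Fin B) := Fintype.card_le_of_injective _ hinj
    _ = B ^ (n - 1) := by
        rw [Fintype.card_fun, Fintype.card_fin]
        congr 1
        rw [Fintype.card_subtype_compl, Fintype.card_subtype_eq, Fintype.card_fin]

lemma total_pairs_bound (n B : ℕ) :
    ∑ ω : Fin n → Fin B, (Finset.univ.filter fun p : Fin n × Fin n =>
      p.1 ≠ p.2 ∧ ω p.1 = ω p.2).card ≤ n ^ 2 * B ^ (n - 1) := by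
  classical
  have h : ∀ ω : Fin n → Fin B, (Finset.univ.filter fun p : Fin n × Fin n =>
      p.1 ≠ p.2 ∧ ω p.1 = ω p.2).card
      = ∑ p : Fin n × Fin n, if p.1 ≠ p.2 ∧ ω p.1 = ω p.2 then 1 else 0 := by
    intro ω; rw [Finset.card_filter]
  simp_rw [h]
  rw [Finset.sum_comm]
  have hb : ∀ p : Fin n × Fin n,
      (∑ ω : Fin n → Fin B, if p.1 ≠ p.2 ∧ ω p.1 = ω p.2 then 1 else 0) ≤ B ^ (n-1) := by
    intro p
    by_cases hp : p.1 = p.2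
    · simp [hp]
    · have he : (∑ ω : Fin n → Fin B, if p.1 ≠ p.2 ∧ ω p.1 = ω p.2 then 1 else 0)
          = (Finset.univ.filter fun ω : Fin n → Fin B => ω p.1 = ω p.2).card := by
        rw [Finset.card_filter]
        exact Finset.sum_congr rfl (by intro ω _; simp [hp])
      rw [he]; exact fiber_bound hp
  calc (∑ p : Fin n × Fin n, ∑ ω : Fin n → Fin B,
        if p.1 ≠ p.2 ∧ ω p.1 = ω p.2 then 1 else 0)
      ≤ ∑ _p : Fin n × Fin n, B^(n-1) := Finset.sum_le_sum (fun p _ => hb p)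
    _ = n^2 * B^(n-1) := by
        rw [Finset.sum_const, smul_eq_mul, Finset.card_univ, Fintype.card_prod,
          Fintype.card_fin, sq]

/-- Upper-deviation bound for the number `G` of boxes among the first
`D_N - φ₁(N) - φ₂(N)` boxes receiving at least two of the
`H(N)(V_N - φ₃(N))` balls placed uniformly at random into `D_N - φ₁(N)`
boxes: for every `f₂(N) → ∞`, `P(G > H(N)²·f₂(N)) ≤ C / f₂(N)` for `N` large. -/
theorem balls_in_boxes_many_pairs_upper_bound
    (β a : ℝ) (hβ0 : 0 < β) (hβ1 : β < 1) (ha : 0 < a)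
    (D V φ₁ φ₂ φ₃ H : ℕ → ℕ)
    (hD : Tendsto (fun N => (D N : ℝ)) atTop atTop)
    (hV : Tendsto (fun N => (V N : ℝ) / Real.sqrt (D N)) atTop (nhds a))
    (hφ₁ : Tendsto (fun N => (φ₁ N : ℝ) / (D N : ℝ)) atTop (nhds 0))
    (hφ₂ : Tendsto (fun N => (φ₂ N : ℝ) / (D N : ℝ)) atTop (nhds 0))
    (hφ₃ : Tendsto (fun N => (φ₃ N : ℝ) / (V N : ℝ)) atTop (nhds 0))
    (hHpos : ∀ N, 0 < H N)
    (hHlow : ∃ ε : ℝ, 0 < ε ∧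
      Tendsto (fun N : ℕ => ((N : ℝ) ^ ε) / (H N : ℝ)) atTop (nhds 0))
    (hHup : Tendsto (fun N => (H N : ℝ) / Real.sqrt (D N)) atTop (nhds 0))
    (f₂ : ℕ → ℝ) (hf₂pos : ∀ N, 0 < f₂ N) (hf₂ : Tendsto f₂ atTop atTop) :
    ∃ C : ℝ, 0 < C ∧ ∃ N₀ : ℕ, ∀ N ≥ N₀,
      (Nat.card {ω : Fin (H N * (V N - φ₃ N)) → Fin (D N - φ₁ N) //
          (H N : ℝ) ^ 2 * f₂ N <
            ((Finset.univ.filter fun x : Fin (D N - φ₁ N) =>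
              (x : ℕ) < D N - φ₁ N - φ₂ N ∧ 2 ≤ boxCount ω x).card : ℝ)} : ℝ) /
        ((D N - φ₁ N : ℕ) : ℝ) ^ (H N * (V N - φ₃ N)) ≤
      C / f₂ N := by
  classical
  refine ⟨(a + 1) ^ 2, by positivity, ?_⟩
  have E1 := hV.eventually_lt_const (lt_add_one a)
  have E2 := hV.eventually_const_lt (half_lt_self ha)
  have E3 := hφ₁.eventually_lt_const (by norm_num : (0:ℝ) < 1/2)
  have E4 := hφ₃.eventually_lt_const (one_pos : (0:ℝ) < 1)
  have E5 := hD.eventually_ge_atTop 1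
  obtain ⟨N₀, hN₀⟩ := eventually_atTop.mp ((((E1.and E2).and (E3.and E4)).and E5))
  refine ⟨N₀, fun N hN => ?_⟩
  obtain ⟨⟨⟨e1, e2⟩, ⟨e3, e4⟩⟩, e5⟩ := hN₀ N hN
  -- basic real facts
  have hsq : 0 < Real.sqrt (D N) := Real.sqrt_pos.mpr (by linarith)
  have hVle : (V N : ℝ) ≤ (a + 1) * Real.sqrt (D N) := by
    rw [div_lt_iff₀ hsq] at e1; linarith
  have hV0 : (0:ℝ) < V N := by
    have h := mul_pos (lt_trans (half_pos ha) e2) hsq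
    rwa [div_mul_cancel₀ _ (ne_of_gt hsq)] at h
  have hVnat : 1 ≤ V N := by exact_mod_cast Nat.cast_pos.mp hV0
  have hφ₃V : φ₃ N < V N := by
    have h := (div_lt_one hV0).mp e4
    exact_mod_cast h
  have hDnat : 1 ≤ D N := by exact_mod_cast e5
  have hφ₁D : 2 * φ₁ N ≤ D N := by
    have h : (φ₁ N : ℝ) < (D N : ℝ) / 2 := by
      rw [div_lt_iff₀ (by linarith : (0:ℝ) < D N)] at e3
      linarith
    have : (2 * φ₁ N : ℝ) ≤ (D N : ℝ) := by push_cast; linarith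
    exact_mod_cast this
  have hBpos : 0 < D N - φ₁ N := by omega
  have hBcast : ((D N - φ₁ N : ℕ) : ℝ) = (D N : ℝ) - φ₁ N := by
    push_cast [Nat.cast_sub (by omega : φ₁ N ≤ D N)]; ring
  have hDB : (D N : ℝ) ≤ 2 * ((D N - φ₁ N : ℕ) : ℝ) := by
    rw [hBcast]
    have : (2 * φ₁ N : ℝ) ≤ (D N : ℝ) := by exact_mod_cast hφ₁D
    push_cast at this ⊢; linarith
  have hV2 : (V N : ℝ) ^ 2 ≤ (a + 1) ^ 2 * D N := by
    have hs := Real.sq_sqrt (show (0:ℝ) ≤ (D N : ℝ) by positivity)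
    nlinarith [Real.sqrt_nonneg (D N : ℝ), hV0]
  -- abbreviations
  set n := H N * (V N - φ₃ N) with hn
  set B := D N - φ₁ N with hB
  have hn1 : 1 ≤ n := Nat.one_le_iff_ne_zero.mpr
    (Nat.mul_ne_zero (Nat.pos_iff_ne_zero.mp (hHpos N)) (by omega))
  have hnHV : n ≤ H N * V N := Nat.mul_le_mul_left _ (Nat.sub_le _ _)
  set G : (Fin n → Fin B) → ℕ := fun ω =>
    (Finset.univ.filter fun x : Fin B =>
      (x : ℕ) < D N - φ₁ N - φ₂ N ∧ 2 ≤ boxCount ω x).card with hG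
  set t := (H N : ℝ) ^ 2 * f₂ N with ht
  have htpos : 0 < t := by
    have hh : (0:ℝ) < H N := by exact_mod_cast hHpos N
    exact mul_pos (pow_pos hh 2) (hf₂pos N)
  set T := Finset.univ.filter (fun ω : Fin n → Fin B => t < (G ω : ℝ)) with hT
  have hNatcard : (Nat.card {ω : Fin n → Fin B // t < (G ω : ℝ)}) = T.card := by
    rw [Nat.card_eq_fintype_card, Fintype.card_subtype]
  -- counting bound
  have keynat : 2 * ∑ ω : Fin n → Fin B, G ω ≤ n ^ 2 * B ^ (n - 1) := by
    calc 2 * ∑ ω : Fin n → Fin B, G ω = ∑ ω : Fin n → Fin B, 2 * G ω := by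
          rw [Finset.mul_sum]
      _ ≤ ∑ ω : Fin n → Fin B, (Finset.univ.filter fun p : Fin n × Fin n =>
            p.1 ≠ p.2 ∧ ω p.1 = ω p.2).card :=
          Finset.sum_le_sum (fun ω _ => pair_bound ω _)
      _ ≤ n ^ 2 * B ^ (n - 1) := total_pairs_bound n B
  -- Markov
  have hTle : (T.card : ℝ) * t ≤ ∑ ω : Fin n → Fin B, (G ω : ℝ) := by
    calc (T.card : ℝ) * t = ∑ _ω ∈ T, t := by rw [Finset.sum_const, nsmul_eq_mul]
      _ ≤ ∑ ω ∈ T, (G ω : ℝ) :=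
          Finset.sum_le_sum (fun ω hω => le_of_lt (Finset.mem_filter.mp hω).2)
      _ ≤ ∑ ω : Fin n → Fin B, (G ω : ℝ) :=
          Finset.sum_le_sum_of_subset_of_nonneg (Finset.subset_univ T)
            (fun _ _ _ => Nat.cast_nonneg _)
  have hSum : (2:ℝ) * ∑ ω : Fin n → Fin B, (G ω : ℝ) ≤ (n:ℝ)^2 * (B:ℝ)^(n-1) := by
    exact_mod_cast keynat
  have h2t : 2 * ((T.card : ℝ) * t) ≤ (n:ℝ)^2 * (B:ℝ)^(n-1) := by linarith
  -- final arithmetic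
  have hBreal : (0:ℝ) < (B:ℝ) := by exact_mod_cast hBpos
  have hpow_pos : (0:ℝ) < (B:ℝ)^n := by positivity
  have hppos : (0:ℝ) < (B:ℝ)^(n-1) := by positivity
  have hPB : (B:ℝ)^(n-1) * (B:ℝ) = (B:ℝ)^n := by
    rw [← pow_succ]; congr 1; omega
  have hgoal : (T.card : ℝ) / (B:ℝ)^n ≤ (a+1)^2 / f₂ N := by
    rw [div_le_div_iff₀ hpow_pos (hf₂pos N)]
    have hHr : (0:ℝ) < (H N : ℝ) := by exact_mod_cast hHpos N
    have hn2 : ((n:ℕ):ℝ) ≤ (H N : ℝ) * V N := by exact_mod_cast hnHV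
    have hnn : (0:ℝ) ≤ ((n:ℕ):ℝ) := Nat.cast_nonneg _
    have hsq2 : ((n:ℕ):ℝ)^2 ≤ ((H N : ℝ) * V N)^2 := by
      apply pow_le_pow_left₀ hnn hn2
    have hV2B : (V N : ℝ)^2 ≤ 2 * (a+1)^2 * (B:ℝ) := by nlinarith
    have hchain : ((n:ℕ):ℝ)^2 * (B:ℝ)^(n-1) ≤
        2 * (H N:ℝ)^2 * ((a+1)^2 * (B:ℝ)^n) := by
      calc ((n:ℕ):ℝ)^2 * (B:ℝ)^(n-1) ≤ ((H N:ℝ) * V N)^2 * (B:ℝ)^(n-1) := by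
            exact mul_le_mul_of_nonneg_right hsq2 (le_of_lt hppos)
        _ ≤ (H N:ℝ)^2 * (2 * (a+1)^2 * (B:ℝ)) * (B:ℝ)^(n-1) := by
            have : ((H N:ℝ) * V N)^2 = (H N:ℝ)^2 * (V N:ℝ)^2 := by ring
            rw [this]
            apply mul_le_mul_of_nonneg_right _ (le_of_lt hppos)
            exact mul_le_mul_of_nonneg_left hV2B (by positivity)
        _ = 2 * (H N:ℝ)^2 * ((a+1)^2 * ((B:ℝ)^(n-1) * (B:ℝ))) := by ring
        _ = 2 * (H N:ℝ)^2 * ((a+1)^2 * (B:ℝ)^n) := by rw [hPB]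
    have hfin : 2 * (H N:ℝ)^2 * ((T.card : ℝ) * f₂ N) ≤
        2 * (H N:ℝ)^2 * ((a+1)^2 * (B:ℝ)^n) := by
      calc 2 * (H N:ℝ)^2 * ((T.card : ℝ) * f₂ N) = 2 * ((T.card : ℝ) * t) := by
            rw [ht]; ring
        _ ≤ ((n:ℕ):ℝ)^2 * (B:ℝ)^(n-1) := h2t
        _ ≤ _ := hchain
    have h2H : (0:ℝ) < 2 * (H N:ℝ)^2 := by positivity
    exact le_of_mul_le_mul_left hfin h2H
  calc (Nat.card {ω : Fin n → Fin B // t < (G ω : ℝ)} : ℝ) / (B:ℝ)^n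
      = (T.card : ℝ) / (B:ℝ)^n := by rw [hNatcard]
    _ ≤ (a+1)^2 / f₂ N := hgoal
end
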